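/- The statistic T_SO = (R^m / n) ∑_{(i_1,...,i_m)} (ν_{i_1,...,i_m} - n/R^m)² − (R^{m-1} / n) ∑_{(i_1,...,i_{m-1})} (ν_{i_1,...,i_{m-1}} - n/R^{m-1})² is non-negative. -/
import Mathlib

/-- The serial-test statistic `T_SO`, built from cyclic pattern counts of lengths `m+1`
and `m` in a sequence with values in a finite set of cardinality `R`, is non-negative. -/
theorem stmt4 {S : Type*} [Fintype S] [DecidableEq S] (n m : ℕ) (hm : 1 ≤ m)
    (hmn : m + 1 ≤ n) (κ : ℕ → S) (R : ℕ) (hR : R = Fintype.card S) (hR1 : 1 ≤ R) :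
    0 ≤ ((R : ℝ) ^ (m + 1) / n) *
          ∑ p : Fin (m + 1) → S,
            (((∑ i ∈ Finset.range n,
                if ∀ t : Fin (m + 1), κ ((i + (t : ℕ)) % n) = p t then 1 else 0 : ℕ) : ℝ)
              - (n : ℝ) / (R : ℝ) ^ (m + 1)) ^ 2
        - ((R : ℝ) ^ m / n) *
          ∑ q : Fin m → S,
            (((∑ i ∈ Finset.range n,
                if ∀ t : Fin m, κ ((i + (t : ℕ)) % n) = q t then 1 else 0 : ℕ) : ℝ)
              - (n : ℝ) / (R : ℝ) ^ m) ^ 2 := by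
  have hRpos : (0:ℝ) < R := by exact_mod_cast hR1
  set ν1 : (Fin (m+1) → S) → ℕ := fun p =>
    ∑ i ∈ Finset.range n, if ∀ t : Fin (m + 1), κ ((i + (t : ℕ)) % n) = p t then 1 else 0
  set ν0 : (Fin m → S) → ℕ := fun q =>
    ∑ i ∈ Finset.range n, if ∀ t : Fin m, κ ((i + (t : ℕ)) % n) = q t then 1 else 0
  -- split condition for snoc patterns
  have hsplit : ∀ (q : Fin m → S) (s : S) (i : ℕ),
      (∀ t : Fin (m + 1), κ ((i + (t : ℕ)) % n) = (Fin.snoc q s : Fin (m+1) → S) t) ↔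
        ((∀ t : Fin m, κ ((i + (t : ℕ)) % n) = q t) ∧ κ ((i + m) % n) = s) := by
    intro q s i
    constructor
    · intro h
      refine ⟨fun t => ?_, ?_⟩
      · have := h t.castSucc
        simpa using this
      · have := h (Fin.last m)
        simpa using this
    · rintro ⟨h1, h2⟩ t
      refine Fin.lastCases ?_ (fun t => ?_) t
      · simpa using h2
      · simpa using h1 t
  -- key counting identity
  have hkey : ∀ q : Fin m → S, (ν0 q : ℝ) = ∑ s : S, (ν1 (Fin.snoc q s : Fin (m+1) → S) : ℝ) := by
    intro q
    have : ν0 q = ∑ s : S, ν1 (Fin.snoc q s : Fin (m+1) → S) := by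
      simp only [ν0, ν1]
      rw [Finset.sum_comm]
      refine Finset.sum_congr rfl fun i _ => ?_
      simp only [hsplit q _ i]
      by_cases hA : ∀ t : Fin m, κ ((i + (t : ℕ)) % n) = q t
      · simp [hA]
      · simp [hA]
    exact_mod_cast congrArg (Nat.cast : ℕ → ℝ) this
  -- Cauchy–Schwarz per q
  have hCS : ∀ q : Fin m → S,
      ((ν0 q : ℝ) - (n : ℝ) / (R : ℝ) ^ m) ^ 2 ≤
        (R : ℝ) * ∑ s : S, ((ν1 (Fin.snoc q s : Fin (m+1) → S) : ℝ) - (n : ℝ) / (R : ℝ) ^ (m+1)) ^ 2 := by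
    intro q
    have h1 : ((ν0 q : ℝ) - (n : ℝ) / (R : ℝ) ^ m) =
        ∑ s : S, ((ν1 (Fin.snoc q s : Fin (m+1) → S) : ℝ) - (n : ℝ) / (R : ℝ) ^ (m+1)) := by
      rw [Finset.sum_sub_distrib, ← hkey q, Finset.sum_const, Finset.card_univ, ← hR,
        nsmul_eq_mul]
      congr 1
      field_simp
      ring
    rw [h1]
    have := sq_sum_le_card_mul_sum_sq
      (s := (Finset.univ : Finset S))
      (f := fun s => ((ν1 (Fin.snoc q s : Fin (m+1) → S) : ℝ) - (n : ℝ) / (R : ℝ) ^ (m+1)))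
    simpa [Finset.card_univ, ← hR] using this
  -- sum over all p via snocEquiv
  have hsum : ∑ p : Fin (m+1) → S, ((ν1 p : ℝ) - (n : ℝ) / (R : ℝ) ^ (m+1)) ^ 2 =
      ∑ qs : S × (Fin m → S),
        ((ν1 (Fin.snoc qs.2 qs.1 : Fin (m+1) → S) : ℝ) - (n : ℝ) / (R : ℝ) ^ (m+1)) ^ 2 := by
    refine (Fintype.sum_equiv (Fin.snocEquiv (fun _ => S)) _ _ fun qs => ?_).symm
    rfl
  have hmain : ∑ q : Fin m → S, ((ν0 q : ℝ) - (n : ℝ) / (R : ℝ) ^ m) ^ 2 ≤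
      (R : ℝ) * ∑ p : Fin (m+1) → S, ((ν1 p : ℝ) - (n : ℝ) / (R : ℝ) ^ (m+1)) ^ 2 := by
    calc ∑ q : Fin m → S, ((ν0 q : ℝ) - (n : ℝ) / (R : ℝ) ^ m) ^ 2
        ≤ ∑ q : Fin m → S, (R : ℝ) *
            ∑ s : S, ((ν1 (Fin.snoc q s : Fin (m+1) → S) : ℝ) - (n : ℝ) / (R : ℝ) ^ (m+1)) ^ 2 :=
          Finset.sum_le_sum fun q _ => hCS q
      _ = (R : ℝ) * ∑ p : Fin (m+1) → S, ((ν1 p : ℝ) - (n : ℝ) / (R : ℝ) ^ (m+1)) ^ 2 := by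
          rw [hsum, Fintype.sum_prod_type, ← Finset.mul_sum, Finset.sum_comm]
  rw [sub_nonneg]
  have hfac : (0:ℝ) ≤ (R : ℝ) ^ m / n := by positivity
  calc ((R : ℝ) ^ m / n) * ∑ q : Fin m → S, ((ν0 q : ℝ) - (n : ℝ) / (R : ℝ) ^ m) ^ 2
      ≤ ((R : ℝ) ^ m / n) * ((R : ℝ) *
          ∑ p : Fin (m+1) → S, ((ν1 p : ℝ) - (n : ℝ) / (R : ℝ) ^ (m+1)) ^ 2) :=
        mul_le_mul_of_nonneg_left hmain hfac
    _ = ((R : ℝ) ^ (m+1) / n) *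
          ∑ p : Fin (m+1) → S, ((ν1 p : ℝ) - (n : ℝ) / (R : ℝ) ^ (m+1)) ^ 2 := by ring
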